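/- arXiv:1012.0974 — 4 statements merged into one kernel-verified Lean document; each statement's English description precedes it below -/
import Mathlib

section
/- Let Δx > 0, Δt > 0, m₀ ∈ ℤ, and let a, b : ℕ → ℤ → ℝ be grid coefficients with |a(n,j)| ≤ A and |b(n,j)| ≤ B for all n ∈ ℕ, j ∈ ℤ, and suppose the CFL condition A·Δt/Δx ≤ 1 holds. If U : ℕ → ℤ → ℝ satisfies the Lax-Friedrichs delay scheme and M ≥ 0 is such that |U(n,j)| ≤ M for all j ∈ ℤ, then |U(n+1,j)| ≤ (1 + B·Δt)·M for all j ∈ ℤ. (One-step maximum-norm stability of the Lax-Friedrichs approximation.) -/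
/-!
Writing `c = a Δt / (2 Δx)`, the Lax-Friedrichs part of the scheme is
`(1/2 - c) U(j+1) + (1/2 + c) U(j-1)`, and the CFL condition says exactly `|c| ≤ 1/2`, so it is a
convex combination of two values bounded by `M`. The delay term adds at most `B Δt M`.
-/

lemma abs_div_two_mul_le_half {a A Δt Δx : ℝ} (hΔx : 0 < Δx) (hΔt : 0 ≤ Δt) (ha : |a| ≤ A)
    (hCFL : A * Δt / Δx ≤ 1) : |a * Δt / (2 * Δx)| ≤ 1 / 2 := by
  have hA : |a| * Δt ≤ Δx := by
    rw [div_le_one hΔx] at hCFL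
    nlinarith
  rw [abs_div, abs_mul, abs_of_nonneg hΔt, abs_of_pos (by positivity : (0 : ℝ) < 2 * Δx), div_le_iff₀ (by positivity)]
  linarith

lemma abs_half_add_sub_mul_sub_le {c u v M : ℝ} (hc : |c| ≤ 1 / 2) (hu : |u| ≤ M) (hv : |v| ≤ M) :
    |1 / 2 * (u + v) - c * (u - v)| ≤ M := by
  rw [abs_le] at hc hu hv ⊢
  obtain ⟨hc₁, hc₂⟩ := hc
  obtain ⟨hu₁, hu₂⟩ := hu
  obtain ⟨hv₁, hv₂⟩ := hv
  constructor <;> nlinarith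

lemma abs_mul_mul_le_mul {t b w B M : ℝ} (ht : 0 ≤ t) (hb : |b| ≤ B) (hw : |w| ≤ M) :
    |t * b * w| ≤ B * t * M := by
  rw [abs_mul, abs_mul, abs_of_nonneg ht, mul_comm B t, mul_assoc, mul_assoc]
  exact mul_le_mul_of_nonneg_left (mul_le_mul hb hw (abs_nonneg w) ((abs_nonneg b).trans hb)) ht

theorem laxFriedrichs_delay_one_step_stability_general
    (Δx Δt A B : ℝ) (hΔx : 0 < Δx) (hΔt : 0 < Δt) (m₀ : ℤ)
    (a b : ℕ → ℤ → ℝ)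
    (ha : ∀ n j, |a n j| ≤ A) (hb : ∀ n j, |b n j| ≤ B)
    (hCFL : A * Δt / Δx ≤ 1)
    (U : ℕ → ℤ → ℝ)
    (hU : ∀ n j, U (n + 1) j =
      (1 / 2) * (U n (j + 1) + U n (j - 1))
        - (a n j * Δt / (2 * Δx)) * (U n (j + 1) - U n (j - 1))
        + Δt * b n j * U n (j - m₀))
    (n : ℕ) (M : ℝ) (hMb : ∀ j, |U n j| ≤ M) :
    ∀ j, |U (n + 1) j| ≤ (1 + B * Δt) * M := by
  intro j
  have hc := abs_div_two_mul_le_half hΔx hΔt.le (ha n j) hCFL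
  rw [hU n j]
  calc _ ≤ M + B * Δt * M :=
        (abs_add_le _ _).trans <| add_le_add
          (abs_half_add_sub_mul_sub_le hc (hMb _) (hMb _))
          (abs_mul_mul_le_mul hΔt.le (hb n j) (hMb _))
    _ = (1 + B * Δt) * M := by ring

/-- One-step maximum-norm stability of the Lax-Friedrichs approximation of the
first-order hyperbolic PDE with point-wise delay. -/
theorem laxFriedrichs_delay_one_step_stability
    (Δx Δt A B : ℝ) (hΔx : 0 < Δx) (hΔt : 0 < Δt) (m₀ : ℤ)
    (a b : ℕ → ℤ → ℝ)
    (ha : ∀ n j, |a n j| ≤ A) (hb : ∀ n j, |b n j| ≤ B)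
    (hCFL : A * Δt / Δx ≤ 1)
    (U : ℕ → ℤ → ℝ)
    (hU : ∀ n j, U (n + 1) j =
      (1 / 2) * (U n (j + 1) + U n (j - 1))
        - (a n j * Δt / (2 * Δx)) * (U n (j + 1) - U n (j - 1))
        + Δt * b n j * U n (j - m₀))
    (n : ℕ) (M : ℝ) (hM : 0 ≤ M) (hMb : ∀ j, |U n j| ≤ M) :
    ∀ j, |U (n + 1) j| ≤ (1 + B * Δt) * M :=
  laxFriedrichs_delay_one_step_stability_general Δx Δt A B hΔx hΔt m₀ a b ha hb hCFL U hU n M hMb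
end

section
/- Let Δx > 0, Δt > 0, m₀ ∈ ℤ, and let a, b : ℕ → ℤ → ℝ be grid coefficients with |a(n,j)| ≤ A and |b(n,j)| ≤ B for all n, j, and suppose the CFL condition A·Δt/Δx ≤ 1 holds. Suppose e : ℕ → ℤ → ℝ and T : ℕ → ℤ → ℝ satisfy, for all n ∈ ℕ and j ∈ ℤ, the error equation e(n+1,j) = (1/2)·(1 − a(n,j)·Δt/Δx)·e(n,j+1) + (1/2)·(1 + a(n,j)·Δt/Δx)·e(n,j−1) + Δt·b(n,j)·e(n,j−m₀) − Δt·T(n,j). If M ≥ 0 and S ≥ 0 are such that |e(n,j)| ≤ M and |T(n,j)| ≤ S for all j ∈ ℤ, then |e(n+1,j)| ≤ (1 + B·Δt)·M + Δt·S for all j ∈ ℤ. (One-step growth bound for the error of the Lax-Friedrichs approximation.) -/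
/-! When the Courant number `L = a Δt/Δx` satisfies `|L| ≤ 1`, as the CFL condition guarantees,
the Lax-Friedrichs average `½(1-L)u + ½(1+L)v` is a convex combination of `u` and `v`, so it does
not increase the sup bound `M`. The delay term then contributes at most `Δt B M` and the
truncation error at most `Δt S`. -/

lemma abs_courant_le_one {a A Δt Δx : ℝ} (hΔt : 0 < Δt) (hΔx : 0 < Δx) (ha : |a| ≤ A)
    (hCFL : A * Δt / Δx ≤ 1) : |a * Δt / Δx| ≤ 1 :=
  calc |a * Δt / Δx| = |a| * Δt / Δx := by
        rw [abs_div, abs_mul, abs_of_pos hΔt, abs_of_pos hΔx]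
    _ ≤ A * Δt / Δx := by gcongr
    _ ≤ 1 := hCFL

lemma abs_laxFriedrichs_average_le {L u v M : ℝ} (hL : |L| ≤ 1) (hu : |u| ≤ M)
    (hv : |v| ≤ M) :
    |1 / 2 * (1 - L) * u + 1 / 2 * (1 + L) * v| ≤ M := by
  obtain ⟨hL₁, hL₂⟩ := abs_le.1 hL
  have hminus : 0 ≤ 1 / 2 * (1 - L) := by linarith
  have hplus : 0 ≤ 1 / 2 * (1 + L) := by linarith
  calc _ ≤ 1 / 2 * (1 - L) * |u| + 1 / 2 * (1 + L) * |v| := by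
        refine (abs_add_le _ _).trans_eq ?_
        rw [abs_mul _ u, abs_mul _ v, abs_of_nonneg hminus, abs_of_nonneg hplus]
    _ ≤ 1 / 2 * (1 - L) * M + 1 / 2 * (1 + L) * M := by gcongr
    _ = M := by ring

theorem laxFriedrichs_delay_error_one_step_general
    (Δx Δt A B : ℝ) (hΔx : 0 < Δx) (hΔt : 0 < Δt) (m₀ : ℤ)
    (a b : ℕ → ℤ → ℝ)
    (ha : ∀ n j, |a n j| ≤ A) (hb : ∀ n j, |b n j| ≤ B)
    (hCFL : A * Δt / Δx ≤ 1)
    (e T : ℕ → ℤ → ℝ)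
    (herr : ∀ n j, e (n + 1) j =
      (1 / 2) * (1 - a n j * Δt / Δx) * e n (j + 1)
        + (1 / 2) * (1 + a n j * Δt / Δx) * e n (j - 1)
        + Δt * b n j * e n (j - m₀) - Δt * T n j)
    (n : ℕ) (M S : ℝ)
    (hMe : ∀ j, |e n j| ≤ M) (hST : ∀ j, |T n j| ≤ S) :
    ∀ j, |e (n + 1) j| ≤ (1 + B * Δt) * M + Δt * S := by
  intro j
  have haverage := abs_laxFriedrichs_average_le (abs_courant_le_one hΔt hΔx (ha n j) hCFL)
    (hMe (j + 1)) (hMe (j - 1))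
  have hdelay : |Δt * b n j * e n (j - m₀)| ≤ Δt * B * M := by
    have hB : 0 ≤ B := (abs_nonneg _).trans (hb n j)
    rw [abs_mul, abs_mul, abs_of_pos hΔt]
    gcongr
    exacts [hb n j, hMe _]
  have htruncation : |Δt * T n j| ≤ Δt * S := by
    rw [abs_mul, abs_of_pos hΔt]
    exact mul_le_mul_of_nonneg_left (hST j) hΔt.le
  rw [herr n j]
  calc _ ≤ |1 / 2 * (1 - a n j * Δt / Δx) * e n (j + 1)
            + 1 / 2 * (1 + a n j * Δt / Δx) * e n (j - 1)|
          + |Δt * b n j * e n (j - m₀)| + |Δt * T n j| :=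
        (abs_sub _ _).trans (add_le_add_left (abs_add_le _ _) _)
    _ ≤ M + Δt * B * M + Δt * S := by gcongr
    _ = (1 + B * Δt) * M + Δt * S := by ring

/-- One-step growth bound for the error of the Lax-Friedrichs approximation of
the hyperbolic PDE with point-wise delay. -/
theorem laxFriedrichs_delay_error_one_step
    (Δx Δt A B : ℝ) (hΔx : 0 < Δx) (hΔt : 0 < Δt) (m₀ : ℤ)
    (a b : ℕ → ℤ → ℝ)
    (ha : ∀ n j, |a n j| ≤ A) (hb : ∀ n j, |b n j| ≤ B)
    (hCFL : A * Δt / Δx ≤ 1)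
    (e T : ℕ → ℤ → ℝ)
    (herr : ∀ n j, e (n + 1) j =
      (1 / 2) * (1 - a n j * Δt / Δx) * e n (j + 1)
        + (1 / 2) * (1 + a n j * Δt / Δx) * e n (j - 1)
        + Δt * b n j * e n (j - m₀) - Δt * T n j)
    (n : ℕ) (M S : ℝ) (hM : 0 ≤ M) (hS : 0 ≤ S)
    (hMe : ∀ j, |e n j| ≤ M) (hST : ∀ j, |T n j| ≤ S) :
    ∀ j, |e (n + 1) j| ≤ (1 + B * Δt) * M + Δt * S :=
  laxFriedrichs_delay_error_one_step_general Δx Δt A B hΔx hΔt m₀ a b ha hb hCFL e T herr n M S hMe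
    hST
end

section
/- Let Δx > 0, Δt > 0, m₀ ∈ ℤ, let a, b : ℕ → ℤ → ℝ be grid coefficients with |a(n,j)| ≤ A and |b(n,j)| ≤ B for all n, j, and suppose the CFL condition A·Δt/Δx ≤ 1 holds. Let u : ℝ → ℝ → ℝ and let U : ℕ → ℤ → ℝ satisfy the Lax-Friedrichs delay scheme with exact initial data U(0,j) = u(j·Δx, 0) for all j ∈ ℤ. Define the truncation error T(n,j) := [u(j·Δx, (n+1)·Δt) − (u((j+1)·Δx, n·Δt) + u((j−1)·Δx, n·Δt))/2]/Δt + a(n,j)·(u((j+1)·Δx, n·Δt) − u((j−1)·Δx, n·Δt))/(2Δx) − b(n,j)·u((j−m₀)·Δx, n·Δt), and assume |T(n,j)| ≤ T_max for all n, j. Then for every n ∈ ℕ and j ∈ ℤ, |U(n,j) − u(j·Δx, n·Δt)| ≤ n·Δt·T_max·(1 + B·Δt)^n ≤ n·Δt·T_max·exp(B·n·Δt). (Convergence of the Lax-Friedrichs approximation on any finite time interval.) -/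
/-!
Writing `c = a Δt / (2Δx)`, the error `e(n,j) = U(n,j) − u(x_j,t_n)` obeys the scheme itself with
the source `−Δt T(n,j)`:
`e(n+1,j) = (1/2 − c) e(n,j+1) + (1/2 + c) e(n,j−1) + Δt b e(n,j−m₀) − Δt T(n,j)`.
The CFL condition gives `|c| ≤ 1/2`, so the first two terms form a convex combination, and the
sup of the error grows by at most the factor `1 + BΔt` plus `Δt T_max` per step. Starting from
zero error, `n` such steps give `n Δt T_max (1 + BΔt)^n`, and `1 + x ≤ eˣ` gives the exponential form.
-/

open Real

theorem abs_courant_le_half {α A Δt Δx : ℝ} (hΔx : 0 < Δx) (hΔt : 0 < Δt) (hα : |α| ≤ A)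
    (hCFL : A * Δt / Δx ≤ 1) : |α * Δt / (2 * Δx)| ≤ 1 / 2 := by
  rw [div_le_one hΔx] at hCFL
  rw [abs_div, abs_mul, abs_of_pos hΔt, abs_of_pos (by positivity : 0 < 2 * Δx),
    div_le_iff₀ (by positivity)]
  linarith [mul_le_mul_of_nonneg_right hα hΔt.le]

theorem abs_half_sub_mul_add_half_add_mul_le {c x y E : ℝ} (hc : |c| ≤ 1 / 2) (hx : |x| ≤ E)
    (hy : |y| ≤ E) : |(1 / 2 - c) * x + (1 / 2 + c) * y| ≤ E := by
  obtain ⟨hc₁, hc₂⟩ := abs_le.1 hc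
  have hp : 0 ≤ 1 / 2 - c := by linarith
  have hq : 0 ≤ 1 / 2 + c := by linarith
  calc |(1 / 2 - c) * x + (1 / 2 + c) * y|
      ≤ (1 / 2 - c) * |x| + (1 / 2 + c) * |y| := by
        refine (abs_add_le _ _).trans_eq ?_
        rw [abs_mul, abs_mul, abs_of_nonneg hp, abs_of_nonneg hq]
    _ ≤ (1 / 2 - c) * E + (1 / 2 + c) * E :=
        add_le_add (mul_le_mul_of_nonneg_left hx hp) (mul_le_mul_of_nonneg_left hy hq)
    _ = E := by ring

theorem one_add_pow_le_exp_mul {x : ℝ} (hx : 0 ≤ 1 + x) (n : ℕ) :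
    (1 + x) ^ n ≤ exp (n * x) := by
  rw [exp_nat_mul]
  exact pow_le_pow_left₀ hx (by linarith [add_one_le_exp x]) n

theorem abs_le_nat_mul_pow_of_step {ι : Type*} {e : ℕ → ι → ℝ} {β τ : ℝ} (hβ : 0 ≤ β)
    (hτ : 0 ≤ τ) (he₀ : ∀ i, e 0 i = 0)
    (hstep : ∀ n E, (∀ i, |e n i| ≤ E) → ∀ i, |e (n + 1) i| ≤ (1 + β) * E + τ) (n : ℕ) (i : ι) :
    |e n i| ≤ n * τ * (1 + β) ^ n := by
  induction n generalizing i with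
  | zero => simp [he₀]
  | succ n ih =>
    have hgrowth : τ ≤ τ * (1 + β) ^ (n + 1) :=
      le_mul_of_one_le_right hτ (one_le_pow₀ (by linarith))
    calc |e (n + 1) i| ≤ (1 + β) * (n * τ * (1 + β) ^ n) + τ := hstep n _ ih i
      _ = n * τ * (1 + β) ^ (n + 1) + τ := by ring
      _ ≤ (n + 1 : ℕ) * τ * (1 + β) ^ (n + 1) := by push_cast; linarith

section LaxFriedrichs

variable {Δx Δt : ℝ} {m₀ : ℤ} {a b : ℕ → ℤ → ℝ} {u : ℝ → ℝ → ℝ} {U : ℕ → ℤ → ℝ}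
  {T : ℕ → ℤ → ℝ}

theorem laxFriedrichs_error_succ (hΔx : Δx ≠ 0) (hΔt : Δt ≠ 0)
    (hU : ∀ n j, U (n + 1) j =
      (1 / 2) * (U n (j + 1) + U n (j - 1))
        - (a n j * Δt / (2 * Δx)) * (U n (j + 1) - U n (j - 1))
        + Δt * b n j * U n (j - m₀))
    (hT : ∀ (n : ℕ) (j : ℤ), T n j =
      (u (j * Δx) ((n + 1) * Δt)
          - (u ((j + 1 : ℤ) * Δx) (n * Δt) + u ((j - 1 : ℤ) * Δx) (n * Δt)) / 2) / Δt
        + a n j * (u ((j + 1 : ℤ) * Δx) (n * Δt) - u ((j - 1 : ℤ) * Δx) (n * Δt))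
            / (2 * Δx)
        - b n j * u ((j - m₀ : ℤ) * Δx) (n * Δt))
    (n : ℕ) (j : ℤ) :
    U (n + 1) j - u (j * Δx) ((n + 1 : ℕ) * Δt) =
      (1 / 2 - a n j * Δt / (2 * Δx)) * (U n (j + 1) - u ((j + 1 : ℤ) * Δx) (n * Δt))
        + (1 / 2 + a n j * Δt / (2 * Δx)) * (U n (j - 1) - u ((j - 1 : ℤ) * Δx) (n * Δt))
        + Δt * b n j * (U n (j - m₀) - u ((j - m₀ : ℤ) * Δx) (n * Δt))
        - Δt * T n j := by
  rw [hU, hT]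
  push_cast
  field_simp
  ring

theorem laxFriedrichs_error_succ_le {A B T_max E : ℝ} (hΔx : 0 < Δx) (hΔt : 0 < Δt)
    (ha : ∀ n j, |a n j| ≤ A) (hb : ∀ n j, |b n j| ≤ B) (hCFL : A * Δt / Δx ≤ 1)
    (hU : ∀ n j, U (n + 1) j =
      (1 / 2) * (U n (j + 1) + U n (j - 1))
        - (a n j * Δt / (2 * Δx)) * (U n (j + 1) - U n (j - 1))
        + Δt * b n j * U n (j - m₀))
    (hT : ∀ (n : ℕ) (j : ℤ), T n j =
      (u (j * Δx) ((n + 1) * Δt)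
          - (u ((j + 1 : ℤ) * Δx) (n * Δt) + u ((j - 1 : ℤ) * Δx) (n * Δt)) / 2) / Δt
        + a n j * (u ((j + 1 : ℤ) * Δx) (n * Δt) - u ((j - 1 : ℤ) * Δx) (n * Δt))
            / (2 * Δx)
        - b n j * u ((j - m₀ : ℤ) * Δx) (n * Δt))
    (hTmax : ∀ n j, |T n j| ≤ T_max) (n : ℕ) (hE : ∀ j : ℤ, |U n j - u (j * Δx) (n * Δt)| ≤ E)
    (j : ℤ) :
    |U (n + 1) j - u (j * Δx) ((n + 1 : ℕ) * Δt)| ≤ (1 + B * Δt) * E + Δt * T_max := by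
  have hE₀ : 0 ≤ E := (abs_nonneg _).trans (hE 0)
  have htransport := abs_half_sub_mul_add_half_add_mul_le
    (abs_courant_le_half hΔx hΔt (ha n j) hCFL) (hE (j + 1)) (hE (j - 1))
  have hdelay : |Δt * b n j * (U n (j - m₀) - u ((j - m₀ : ℤ) * Δx) (n * Δt))| ≤ Δt * B * E := by
    rw [abs_mul, abs_mul, abs_of_pos hΔt]
    exact mul_le_mul (mul_le_mul_of_nonneg_left (hb n j) hΔt.le) (hE _) (abs_nonneg _)
      (mul_nonneg hΔt.le ((abs_nonneg _).trans (hb n j)))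
  have htruncation : |Δt * T n j| ≤ Δt * T_max := by
    rw [abs_mul, abs_of_pos hΔt]
    exact mul_le_mul_of_nonneg_left (hTmax n j) hΔt.le
  rw [laxFriedrichs_error_succ hΔx.ne' hΔt.ne' hU hT]
  calc _ ≤ E + Δt * B * E + Δt * T_max :=
        (abs_sub _ _).trans (add_le_add ((abs_add_le _ _).trans (add_le_add htransport hdelay))
          htruncation)
    _ = (1 + B * Δt) * E + Δt * T_max := by ring

end LaxFriedrichs

/-- Convergence of the Lax-Friedrichs approximation of the hyperbolic PDE with
point-wise delay on any finite time interval: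
`|U(n,j) − u(x_j, t_n)| ≤ n Δt T_max (1 + BΔt)^n ≤ n Δt T_max exp(B n Δt)`. -/
theorem laxFriedrichs_delay_convergence
    (Δx Δt A B : ℝ) (hΔx : 0 < Δx) (hΔt : 0 < Δt) (m₀ : ℤ)
    (a b : ℕ → ℤ → ℝ)
    (ha : ∀ n j, |a n j| ≤ A) (hb : ∀ n j, |b n j| ≤ B)
    (hCFL : A * Δt / Δx ≤ 1)
    (u : ℝ → ℝ → ℝ) (U : ℕ → ℤ → ℝ)
    (hU : ∀ n j, U (n + 1) j =
      (1 / 2) * (U n (j + 1) + U n (j - 1))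
        - (a n j * Δt / (2 * Δx)) * (U n (j + 1) - U n (j - 1))
        + Δt * b n j * U n (j - m₀))
    (hU0 : ∀ j : ℤ, U 0 j = u (j * Δx) 0)
    (T : ℕ → ℤ → ℝ)
    (hT : ∀ (n : ℕ) (j : ℤ), T n j =
      (u (j * Δx) ((n + 1) * Δt)
          - (u ((j + 1 : ℤ) * Δx) (n * Δt) + u ((j - 1 : ℤ) * Δx) (n * Δt)) / 2) / Δt
        + a n j * (u ((j + 1 : ℤ) * Δx) (n * Δt) - u ((j - 1 : ℤ) * Δx) (n * Δt))
            / (2 * Δx)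
        - b n j * u ((j - m₀ : ℤ) * Δx) (n * Δt))
    (T_max : ℝ) (hTmax : ∀ n j, |T n j| ≤ T_max) :
    ∀ (n : ℕ) (j : ℤ),
      |U n j - u (j * Δx) (n * Δt)| ≤ n * Δt * T_max * (1 + B * Δt) ^ n ∧
      (n : ℝ) * Δt * T_max * (1 + B * Δt) ^ n
        ≤ n * Δt * T_max * Real.exp (B * n * Δt) := by
  have hB : 0 ≤ B := (abs_nonneg _).trans (hb 0 0)
  have hTmax₀ : 0 ≤ T_max := (abs_nonneg _).trans (hTmax 0 0)
  intro n j
  constructor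
  · have herror := abs_le_nat_mul_pow_of_step (e := fun n j => U n j - u (j * Δx) (n * Δt))
      (mul_nonneg hB hΔt.le) (mul_nonneg hΔt.le hTmax₀) (by simp [hU0])
      (fun n _ hE => laxFriedrichs_error_succ_le hΔx hΔt ha hb hCFL hU hT hTmax n hE) n j
    simpa only [mul_assoc] using herror
  · have hexp := one_add_pow_le_exp_mul (by positivity : 0 ≤ 1 + B * Δt) n
    rw [show (n : ℝ) * (B * Δt) = B * n * Δt by ring] at hexp
    gcongr
end

section
/- Let Δx > 0, Δy > 0, Δt > 0, m₀, q₀ ∈ ℤ, and let a, b, c : ℕ → ℤ → ℤ → ℝ be grid coefficients with |a(n,i,j)| ≤ A, |b(n,i,j)| ≤ B, |c(n,i,j)| ≤ C for all n, i, j. Suppose the CFL-type conditions A·Δt/Δx ≤ 1/2 and B·Δt/Δy ≤ 1/2 hold (so that in particular A·Δt/Δx + B·Δt/Δy ≤ 1). If U : ℕ → ℤ → ℤ → ℝ satisfies the two-dimensional Lax-Friedrichs delay scheme and M ≥ 0 is such that |U(n,i,j)| ≤ M for all i, j ∈ ℤ, then |U(n+1,i,j)| ≤ (1 + C·Δt)·M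 for all i, j ∈ ℤ. (One-step maximum-norm stability of the two-dimensional Lax-Friedrichs approximation.) -/
/-! Writing `p = Δt a / (2Δx)` and `q = Δt b / (2Δy)`, the scheme reads
`U(n+1,i,j) = (1/4 - p) U(n,i+1,j) + (1/4 + p) U(n,i-1,j) + (1/4 - q) U(n,i,j+1)
  + (1/4 + q) U(n,i,j-1) + Δt c U(n,i-m₀,j-q₀)`.
The CFL conditions give `|p|, |q| ≤ 1/4`, so the first four weights are nonnegative and sum
to `1`: the averaging part is bounded by `M`, and the delay term adds at most `C Δt M`. -/

lemma abs_mul_add_sub_mul_sub_le {w p u v M : ℝ} (hp : |p| ≤ w) (hu : |u| ≤ M) (hv : |v| ≤ M) :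
    |w * (u + v) - p * (u - v)| ≤ 2 * w * M := by
  have hwp : 0 ≤ w - p := by linarith [le_abs_self p]
  have hwp' : 0 ≤ w + p := by linarith [neg_abs_le p]
  calc |w * (u + v) - p * (u - v)| = |(w - p) * u + (w + p) * v| := by ring_nf
    _ ≤ |(w - p) * u| + |(w + p) * v| := abs_add_le _ _
    _ = (w - p) * |u| + (w + p) * |v| := by
      rw [abs_mul, abs_mul, abs_of_nonneg hwp, abs_of_nonneg hwp']
    _ ≤ (w - p) * M + (w + p) * M :=
      add_le_add (mul_le_mul_of_nonneg_left hu hwp) (mul_le_mul_of_nonneg_left hv hwp')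
    _ = 2 * w * M := by ring

lemma abs_courant_mul_le_quarter {Δt Δx a A : ℝ} (hΔx : 0 < Δx) (hΔt : 0 ≤ Δt) (ha : |a| ≤ A)
    (hCFL : A * Δt / Δx ≤ 1 / 2) : |Δt / (2 * Δx) * a| ≤ 1 / 4 := by
  rw [abs_mul, abs_of_nonneg (by positivity)]
  calc Δt / (2 * Δx) * |a| ≤ Δt / (2 * Δx) * A := by gcongr
    _ = A * Δt / Δx / 2 := by field_simp
    _ ≤ 1 / 4 := by linarith

lemma abs_mul_mul_le {t c u C M : ℝ} (ht : 0 ≤ t) (hc : |c| ≤ C) (hu : |u| ≤ M) :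
    |t * c * u| ≤ C * t * M := by
  rw [abs_mul, abs_mul, abs_of_nonneg ht]
  calc t * |c| * |u| ≤ t * C * M :=
        mul_le_mul (by gcongr) hu (abs_nonneg _) (mul_nonneg ht ((abs_nonneg c).trans hc))
    _ = C * t * M := by ring

theorem laxFriedrichs2D_delay_one_step_stability_general
    (Δx Δy Δt A B C : ℝ) (hΔx : 0 < Δx) (hΔy : 0 < Δy) (hΔt : 0 < Δt)
    (m₀ q₀ : ℤ)
    (a b c : ℕ → ℤ → ℤ → ℝ)
    (ha : ∀ n i j, |a n i j| ≤ A) (hb : ∀ n i j, |b n i j| ≤ B)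
    (hc : ∀ n i j, |c n i j| ≤ C)
    (hCFLx : A * Δt / Δx ≤ 1 / 2) (hCFLy : B * Δt / Δy ≤ 1 / 2)
    (U : ℕ → ℤ → ℤ → ℝ)
    (hU : ∀ n i j, U (n + 1) i j =
      (1 / 4) * (U n (i + 1) j + U n (i - 1) j + U n i (j + 1) + U n i (j - 1))
        - (Δt / (2 * Δx)) * a n i j * (U n (i + 1) j - U n (i - 1) j)
        - (Δt / (2 * Δy)) * b n i j * (U n i (j + 1) - U n i (j - 1))
        + Δt * c n i j * U n (i - m₀) (j - q₀))
    (n : ℕ) (M : ℝ) (hMb : ∀ i j, |U n i j| ≤ M) :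
    ∀ i j, |U (n + 1) i j| ≤ (1 + C * Δt) * M := by
  intro i j
  have hx := abs_mul_add_sub_mul_sub_le (abs_courant_mul_le_quarter hΔx hΔt.le (ha n i j) hCFLx)
    (hMb (i + 1) j) (hMb (i - 1) j)
  have hy := abs_mul_add_sub_mul_sub_le (abs_courant_mul_le_quarter hΔy hΔt.le (hb n i j) hCFLy)
    (hMb i (j + 1)) (hMb i (j - 1))
  have hdelay := abs_mul_mul_le hΔt.le (hc n i j) (hMb (i - m₀) (j - q₀))
  calc |U (n + 1) i j|
      = |(1 / 4 * (U n (i + 1) j + U n (i - 1) j)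
            - Δt / (2 * Δx) * a n i j * (U n (i + 1) j - U n (i - 1) j))
          + (1 / 4 * (U n i (j + 1) + U n i (j - 1))
            - Δt / (2 * Δy) * b n i j * (U n i (j + 1) - U n i (j - 1)))
          + Δt * c n i j * U n (i - m₀) (j - q₀)| := by rw [hU]; ring_nf
    _ ≤ 2 * (1 / 4) * M + 2 * (1 / 4) * M + C * Δt * M :=
      (abs_add_three _ _ _).trans (add_le_add_three hx hy hdelay)
    _ = (1 + C * Δt) * M := by ring

/-- One-step maximum-norm stability of the two-dimensional Lax-Friedrichs
approximation of `u_t + a u_x + b u_y = c u(x−α, y−β, t)`. -/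
theorem laxFriedrichs2D_delay_one_step_stability
    (Δx Δy Δt A B C : ℝ) (hΔx : 0 < Δx) (hΔy : 0 < Δy) (hΔt : 0 < Δt)
    (m₀ q₀ : ℤ)
    (a b c : ℕ → ℤ → ℤ → ℝ)
    (ha : ∀ n i j, |a n i j| ≤ A) (hb : ∀ n i j, |b n i j| ≤ B)
    (hc : ∀ n i j, |c n i j| ≤ C)
    (hCFLx : A * Δt / Δx ≤ 1 / 2) (hCFLy : B * Δt / Δy ≤ 1 / 2)
    (U : ℕ → ℤ → ℤ → ℝ)
    (hU : ∀ n i j, U (n + 1) i j =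
      (1 / 4) * (U n (i + 1) j + U n (i - 1) j + U n i (j + 1) + U n i (j - 1))
        - (Δt / (2 * Δx)) * a n i j * (U n (i + 1) j - U n (i - 1) j)
        - (Δt / (2 * Δy)) * b n i j * (U n i (j + 1) - U n i (j - 1))
        + Δt * c n i j * U n (i - m₀) (j - q₀))
    (n : ℕ) (M : ℝ) (hM : 0 ≤ M) (hMb : ∀ i j, |U n i j| ≤ M) :
    ∀ i j, |U (n + 1) i j| ≤ (1 + C * Δt) * M :=
  laxFriedrichs2D_delay_one_step_stability_general Δx Δy Δt A B C hΔx hΔy hΔt m₀ q₀ a b c ha hb hc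
    hCFLx hCFLy U hU n M hMb
end
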